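/- arXiv:1310.4705 — 7 statements merged into one kernel-verified Lean document; each statement's English description precedes it below -/
import Mathlib

section
/- Let R be a rack acting on a set X. Then the binary operation on X × R defined by (x,r) ◁ (x',r') := (x·r', r ◁ r') is a rack structure on X × R (the hemi-semi-direct product): for each fixed (x',r') the map (x,r) ↦ (x,r) ◁ (x',r') is a bijection of X × R, and the self-distributivity law ((x,r) ◁ (x',r')) ◁ (x'',r'') = ((x,r) ◁ (x'',r'')) ◁ ((x',r') ◁ (x'',r'')) holds. -/
/-- A right rack. -/
class RightRack (R : Type*) where
  act : R → R → R
  act_bij : ∀ y : R, Function.Bijective (fun x => act x y)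
  self_distrib : ∀ x y z : R, act (act x y) z = act (act x z) (act y z)

/-- An action of a rack `R` on a set `X`: a family of bijections `x ↦ x · r`
satisfying `(x · r) · r' = (x · r') · (r ◁ r')`. -/
structure RackAction (R X : Type*) [RightRack R] where
  smul : X → R → X
  smul_bij : ∀ r : R, Function.Bijective (fun x => smul x r)
  smul_act : ∀ (x : X) (r r' : R),
    smul (smul x r) r' = smul (smul x r') (RightRack.act r r')

/-- The hemi-semi-direct product operation on `X × R`:
`(x, r) ◁ (x', r') := (x · r', r ◁ r')`. -/
def hemiSemiDirect {R X : Type*} [RightRack R] (ρ : RackAction R X)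
    (p q : X × R) : X × R :=
  (ρ.smul p.1 q.2, RightRack.act p.2 q.2)

/-- the hemi-semi-direct product operation is a rack structure on `X × R`:
right translations are bijections and self-distributivity holds. -/
theorem hemiSemiDirect_is_rack (R X : Type*) [RightRack R] (ρ : RackAction R X) :
    (∀ q : X × R, Function.Bijective (fun p : X × R => hemiSemiDirect ρ p q)) ∧
    (∀ p q u : X × R,
      hemiSemiDirect ρ (hemiSemiDirect ρ p q) u =
        hemiSemiDirect ρ (hemiSemiDirect ρ p u) (hemiSemiDirect ρ q u)) := by
  constructor
  · intro q
    have h : (fun p : X × R => hemiSemiDirect ρ p q) =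
        Prod.map (fun x => ρ.smul x q.2) (fun r => RightRack.act r q.2) := rfl
    rw [h]
    exact (ρ.smul_bij q.2).prodMap (RightRack.act_bij q.2)
  · intro p q u
    exact Prod.ext (ρ.smul_act _ _ _) (RightRack.self_distrib _ _ _)
end

section
/- Let R be a rack, X an R-set, and p : X → R a map satisfying the generalized augmentation identity p(x·r) = p(x) ◁ r for all x ∈ X, r ∈ R (a generalized augmented rack). Define x ◁ y := x·p(y) on X. Then: (i) (X, ◁) is a rack (each map x ↦ x ◁ y is bijective and ◁ is self-distributive); (ii) p : (X,◁) → R is a morphism of racks, p(x ◁ y) = p(x) ◁ p(y); (iii) R acts on the rack (X,◁) by rack automorphisms, i.e. (x ◁ y)·r = (x·r) ◁ (y·r); and (iv) p is equivariant and the Peiffer identity x·p(y) = x ◁ y holds. Hence p : X → R is a crossed module of racks, and conversely every crossed module of racks arises this way, so crossed modules of racks are in one-to-one correspondence with generalized augmented racks. -/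
/-- A generalized augmented rack: a rack `R`, an `R`-set `X` and a map `p : X → R`
satisfying the generalized augmentation identity `p (x · r) = p(x) ◁ r`. -/
structure GenAugRack (X R : Type*) [RightRack R] where
  smul : X → R → X
  smul_bij : ∀ r : R, Function.Bijective (fun x => smul x r)
  smul_act : ∀ (x : X) (r r' : R),
    smul (smul x r) r' = smul (smul x r') (RightRack.act r r')
  p : X → R
  aug : ∀ (x : X) (r : R), p (smul x r) = RightRack.act (p x) r

/-- A crossed module of racks with target the rack `R`: a rack structure on `X`,
a rack morphism `μ : X → R`, and an action of `R` on the rack `X` by rack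
automorphisms, such that `μ` is equivariant and the Peiffer identity holds. -/
structure RackCrossedModule (X R : Type*) [RightRack R] where
  act : X → X → X
  act_bij : ∀ y : X, Function.Bijective (fun x => act x y)
  self_distrib : ∀ x y z : X, act (act x y) z = act (act x z) (act y z)
  μ : X → R
  μ_hom : ∀ x y : X, μ (act x y) = RightRack.act (μ x) (μ y)
  smul : X → R → X
  smul_bij : ∀ r : R, Function.Bijective (fun x => smul x r)
  smul_act : ∀ (x : X) (r r' : R),
    smul (smul x r) r' = smul (smul x r') (RightRack.act r r')
  smul_aut : ∀ (x y : X) (r : R), smul (act x y) r = act (smul x r) (smul y r)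
  equivar : ∀ (x : X) (r : R), μ (smul x r) = RightRack.act (μ x) r
  peiffer : ∀ x y : X, smul x (μ y) = act x y

/-!
The action axiom and the augmentation identity give
`(x · p y) · r = (x · r) · (p y ◁ r) = (x · r) · p (y · r)`, which says that `R` acts by
automorphisms of `x ◁ y := x · p y`; taking `r = p z` it is self-distributivity.
Conversely, the Peiffer identity forces the rack operation of a crossed module to be
`x ◁ y = x · μ y`, so a crossed module is determined by its underlying generalized
augmented rack.
-/

namespace GenAugRack

variable {X R : Type*} [RightRack R] (A : GenAugRack X R)

theorem smul_smul_p (x y : X) (r : R) :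
    A.smul (A.smul x (A.p y)) r = A.smul (A.smul x r) (A.p (A.smul y r)) := by
  rw [A.smul_act, A.aug]

def toRackCrossedModule : RackCrossedModule X R where
  act x y := A.smul x (A.p y)
  act_bij y := A.smul_bij (A.p y)
  self_distrib x y z := A.smul_smul_p x y (A.p z)
  μ := A.p
  μ_hom x y := A.aug x (A.p y)
  smul := A.smul
  smul_bij := A.smul_bij
  smul_act := A.smul_act
  smul_aut := A.smul_smul_p
  equivar := A.aug
  peiffer _ _ := rfl

end GenAugRack

namespace RackCrossedModule

variable {X R : Type*} [RightRack R]

def toGenAugRack (C : RackCrossedModule X R) : GenAugRack X R :=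
  ⟨C.smul, C.smul_bij, C.smul_act, C.μ, C.equivar⟩

theorem ext_of_μ_of_smul {C D : RackCrossedModule X R} (hμ : C.μ = D.μ)
    (hsmul : C.smul = D.smul) : C = D := by
  have hact : C.act = D.act := by
    funext x y
    rw [← C.peiffer, ← D.peiffer, hμ, hsmul]
  cases C
  cases D
  cases hact
  cases hμ
  cases hsmul
  rfl

end RackCrossedModule

def genAugRackEquivRackCrossedModule (X R : Type*) [RightRack R] :
    GenAugRack X R ≃ RackCrossedModule X R where
  toFun := GenAugRack.toRackCrossedModule
  invFun := RackCrossedModule.toGenAugRack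
  left_inv _ := rfl
  right_inv _ := RackCrossedModule.ext_of_μ_of_smul rfl rfl

/-- given a generalized augmented rack `p : X → R`, the operation
`x ◁ y := x · p(y)` makes `X` a rack, `p` a rack morphism, the `R`-action is by rack
automorphisms, `p` is equivariant and the Peiffer identity holds; hence `p : X → R`
is a crossed module of racks. Conversely every crossed module of racks arises this
way: crossed modules of racks are in one-to-one correspondence with generalized
augmented racks. -/
theorem genAugRack_equiv_rackCrossedModule (X R : Type*) [RightRack R] :
    (∀ A : GenAugRack X R,
      -- (i) `x ◁ y := x · p(y)` is a rack structure on `X`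
      (∀ y : X, Function.Bijective (fun x : X => A.smul x (A.p y))) ∧
      (∀ x y z : X,
        A.smul (A.smul x (A.p y)) (A.p z) =
          A.smul (A.smul x (A.p z)) (A.p (A.smul y (A.p z)))) ∧
      -- (ii) `p` is a morphism of racks
      (∀ x y : X, A.p (A.smul x (A.p y)) = RightRack.act (A.p x) (A.p y)) ∧
      -- (iii) `R` acts on the rack `X` by rack automorphisms
      (∀ (x y : X) (r : R),
        A.smul (A.smul x (A.p y)) r = A.smul (A.smul x r) (A.p (A.smul y r))) ∧
      -- (iv) `p` is equivariant (and the Peiffer identity holds by definition)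
      (∀ (x : X) (r : R), A.p (A.smul x r) = RightRack.act (A.p x) r)) ∧
    Nonempty (GenAugRack X R ≃ RackCrossedModule X R) := by
  refine ⟨fun A => ?_, ⟨genAugRackEquivRackCrossedModule X R⟩⟩
  let C := A.toRackCrossedModule
  exact ⟨C.act_bij, C.self_distrib, C.μ_hom, C.smul_aut, C.equivar⟩
end

section
/- Let p : X → R be a crossed module of racks (equivalently, a generalized augmented rack: a rack R, an R-set X and an equivariant map p : X → R with p(x·r) = p(x) ◁ r). Then the composite i ∘ p : X → As(R) is an augmented rack: there exists a right group action of As(R) on the set X satisfying x·i(r) = x·r for all x ∈ X, r ∈ R, such that the augmentation identity (i ∘ p)(x·g) = g⁻¹ (i ∘ p)(x) g holds for all x ∈ X and all g ∈ As(R). -/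
/-- The relations `y⁻¹ x⁻¹ y (x ◁ y)` defining the associated group of a rack. -/
def rackRels (R : Type*) [RightRack R] : Set (FreeGroup R) :=
  {w | ∃ x y : R,
    w = (FreeGroup.of y)⁻¹ * (FreeGroup.of x)⁻¹ * FreeGroup.of y *
        FreeGroup.of (RightRack.act x y)}

/-- The associated group `As(R)` of a rack `R`. -/
def AsGroup (R : Type*) [RightRack R] : Type _ := PresentedGroup (rackRels R)

instance (R : Type*) [RightRack R] : Group (AsGroup R) :=
  inferInstanceAs (Group (PresentedGroup (rackRels R)))

/-- The canonical map `i : R → As(R)`. -/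
def asOf {R : Type*} [RightRack R] (r : R) : AsGroup R :=
  PresentedGroup.of (rels := rackRels R) r

/-
Since `(x·r)·r' = (x·r')·(r ◁ r')`, the permutations `x ↦ x·r` satisfy the defining relations
of `As(R)` (read in the opposite group, as the action is on the right), so they extend to a
right action of `As(R)`. The elements `g` satisfying the augmentation identity form a subgroup,
which contains every generator `i(r)` because `p` is equivariant and `i (x ◁ y) = i(y)⁻¹ i(x) i(y)`
in `As(R)`; hence it is everything.
-/

open MulOpposite

namespace AsGroup

variable {R : Type*} [RightRack R]

theorem asOf_act (x y : R) : asOf (RightRack.act x y) = (asOf y)⁻¹ * asOf x * asOf y := by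
  have h : (asOf y)⁻¹ * (asOf x)⁻¹ * asOf y * asOf (RightRack.act x y) = 1 :=
    PresentedGroup.one_of_mem ⟨x, y, rfl⟩
  rw [eq_inv_of_mul_eq_one_right h]
  group

def lift {G : Type*} [Group G] (f : R → G)
    (hf : ∀ x y, f (RightRack.act x y) = (f y)⁻¹ * f x * f y) : AsGroup R →* G :=
  PresentedGroup.toGroup (f := f) <| by
    rintro _ ⟨x, y, rfl⟩
    simp only [map_mul, map_inv, FreeGroup.lift_apply_of, hf]
    group

@[simp]
theorem lift_asOf {G : Type*} [Group G] (f : R → G)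
    (hf : ∀ x y, f (RightRack.act x y) = (f y)⁻¹ * f x * f y) (r : R) :
    lift f hf (asOf r) = f r :=
  PresentedGroup.toGroup.of _

theorem generated_by (H : Subgroup (AsGroup R)) (h : ∀ r, asOf r ∈ H) (g : AsGroup R) : g ∈ H :=
  PresentedGroup.generated_by _ H h g

end AsGroup

def conjEquivariantSubgroup {G X : Type*} [Group G] (φ : G →* (Equiv.Perm X)ᵐᵒᵖ)
    (F : X → G) : Subgroup G where
  carrier := {g | ∀ x, F ((φ g).unop x) = g⁻¹ * F x * g}
  one_mem' x := by simp
  mul_mem' {g h} hg hh x := by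
    rw [map_mul, unop_mul, Equiv.Perm.mul_apply, hh, hg]
    group
  inv_mem' {g} hg x := by
    have hx : (φ g).unop ((φ g⁻¹).unop x) = x := by
      rw [← Equiv.Perm.mul_apply, ← unop_mul, ← map_mul, inv_mul_cancel]
      simp
    have := hg ((φ g⁻¹).unop x)
    rw [hx] at this
    rw [this]
    group

namespace GenAugRack

variable {X R : Type*} [RightRack R] (A : GenAugRack X R)

noncomputable def perm (r : R) : Equiv.Perm X := Equiv.ofBijective _ (A.smul_bij r)

@[simp]
theorem perm_apply (r : R) (x : X) : A.perm r x = A.smul x r := rfl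

theorem op_perm_act (r r' : R) :
    op (A.perm (RightRack.act r r')) = (op (A.perm r'))⁻¹ * op (A.perm r) * op (A.perm r') := by
  have h : A.perm r' * A.perm r = A.perm (RightRack.act r r') * A.perm r' :=
    Equiv.ext fun x => A.smul_act x r r'
  rw [← op_inv, ← op_mul, ← op_mul, op_inj, ← mul_assoc, h, mul_inv_cancel_right]

noncomputable def asGroupAction : AsGroup R →* (Equiv.Perm X)ᵐᵒᵖ :=
  AsGroup.lift (fun r => op (A.perm r)) A.op_perm_act

theorem asGroupAction_asOf (x : X) (r : R) : (A.asGroupAction (asOf r)).unop x = A.smul x r := by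
  simp [asGroupAction]

theorem asOf_p_asGroupAction (x : X) (g : AsGroup R) :
    asOf (A.p ((A.asGroupAction g).unop x)) = g⁻¹ * asOf (A.p x) * g := by
  suffices g ∈ conjEquivariantSubgroup A.asGroupAction (asOf ∘ A.p) from this x
  refine AsGroup.generated_by _ (fun r x => ?_) g
  simp only [Function.comp_apply, A.asGroupAction_asOf, A.aug, AsGroup.asOf_act]

end GenAugRack

/-- for a crossed module of racks (equivalently a generalized augmented
rack) `p : X → R`, the composite `i ∘ p : X → As(R)` is an augmented rack: there is a
right group action `ρ` of `As(R)` on `X` with `x · i(r) = x · r`, satisfying the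
augmentation identity `(i ∘ p)(x · g) = g⁻¹ (i ∘ p)(x) g`. -/
theorem genAugRack_gives_augmented_rack_over_asGroup (X R : Type*) [RightRack R]
    (A : GenAugRack X R) :
    ∃ ρ : X → AsGroup R → X,
      (∀ x : X, ρ x 1 = x) ∧
      (∀ (x : X) (g h : AsGroup R), ρ (ρ x g) h = ρ x (g * h)) ∧
      (∀ (x : X) (r : R), ρ x (asOf r) = A.smul x r) ∧
      (∀ (x : X) (g : AsGroup R),
        asOf (A.p (ρ x g)) = g⁻¹ * asOf (A.p x) * g) :=
  ⟨fun x g => (A.asGroupAction g).unop x, fun x => by simp, fun x g h => by simp,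
    A.asGroupAction_asOf, A.asOf_p_asGroupAction⟩
end

section
/- Let p₁ : X → G and p₂ : Y → G be augmented racks over a fixed group G. Define on X × Y the diagonal action (x,y)·g := (x·g, y·g) and the map p(x,y) := p₁(x)p₂(y). Then: (i) p : X × Y → G is again an augmented rack, i.e. p((x,y)·g) = g⁻¹ p(x,y) g; (ii) the map c_{X,Y} : X × Y → Y × X, c_{X,Y}(x,y) := (y, x·p₂(y)), is a bijection; (iii) c_{X,Y} is G-equivariant: c_{X,Y}((x,y)·g) = c_{X,Y}(x,y)·g; (iv) c_{X,Y} commutes with the augmentations: p₂(y)·p₁(x·p₂(y)) = p₁(x)·p₂(y); and (v) for augmented racks X, Y, Z over G the braid relation holds: (c_{Y,Z} × id_X) ∘ (id_Y × c_{X,Z}) ∘ (c_{X,Y} × id_Z) = (id_Z × c_{X,Y}) ∘ (c_{X,Z} × id_Y) ∘ (id_X × c_{Y,Z}) as maps X × Y × Z → Z × Y × X. Hence c defines a braiding on the category of augmented racks over G. -/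
/-- An augmented rack over a group `G`. -/
structure AugRack (X G : Type*) [Group G] where
  smul : X → G → X
  smul_one : ∀ x : X, smul x 1 = x
  smul_mul : ∀ (x : X) (g h : G), smul (smul x g) h = smul x (g * h)
  p : X → G
  aug : ∀ (x : X) (g : G), p (smul x g) = g⁻¹ * p x * g

/-- The braiding map `c_{X,Y} : X × Y → Y × X`, `c(x, y) = (y, x · p₂(y))`, for
augmented racks `p₁ : X → G` and `p₂ : Y → G`. -/
def augBraid {X Y G : Type*} [Group G] (A : AugRack X G) (B : AugRack Y G)
    (q : X × Y) : Y × X :=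
  (q.2, A.smul q.1 (B.p q.2))

/-- for augmented racks `p₁ : X → G`, `p₂ : Y → G` over a fixed group `G`,
with the diagonal action and augmentation `p(x,y) = p₁(x) p₂(y)` on `X × Y`:
(i) `p : X × Y → G` is again an augmented rack;
(ii) `c_{X,Y}(x,y) = (y, x · p₂(y))` is a bijection;
(iii) `c_{X,Y}` is `G`-equivariant;
(iv) `c_{X,Y}` commutes with the augmentations; and
(v) the braid relation holds for augmented racks `X`, `Y`, `Z` over `G`.
Hence `c` defines a braiding on the category of augmented racks over `G`. -/
theorem augRack_braiding (X Y Z G : Type*) [Group G]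
    (A : AugRack X G) (B : AugRack Y G) (C : AugRack Z G) :
    -- (i) the tensor product is an augmented rack
    (∀ (x : X) (y : Y) (g : G),
      A.p (A.smul x g) * B.p (B.smul y g) = g⁻¹ * (A.p x * B.p y) * g) ∧
    -- (ii) the braiding is a bijection
    Function.Bijective (augBraid A B) ∧
    -- (iii) the braiding is `G`-equivariant
    (∀ (x : X) (y : Y) (g : G),
      augBraid A B (A.smul x g, B.smul y g) =
        (B.smul (augBraid A B (x, y)).1 g, A.smul (augBraid A B (x, y)).2 g)) ∧
    -- (iv) the braiding commutes with the augmentations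
    (∀ (x : X) (y : Y), B.p y * A.p (A.smul x (B.p y)) = A.p x * B.p y) ∧
    -- (v) the braid relation
    (∀ w : X × Y × Z,
      (let u := augBraid A B (w.1, w.2.1);
       let v := augBraid A C (u.2, w.2.2);
       let t := augBraid B C (u.1, v.1);
       ((t.1, t.2, v.2) : Z × Y × X)) =
      (let u' := augBraid B C (w.2.1, w.2.2);
       let v' := augBraid A C (w.1, u'.1);
       let t' := augBraid A B (v'.2, u'.2);
       ((v'.1, t'.1, t'.2) : Z × Y × X))) := by
  refine ⟨?_, ?_, ?_, ?_, ?_⟩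
  · intro x y g
    rw [A.aug, B.aug]; group
  · constructor
    · rintro ⟨x, y⟩ ⟨x', y'⟩ h
      simp only [augBraid, Prod.mk.injEq] at h
      obtain ⟨h1, h2⟩ := h
      subst h1
      have := congrArg (fun t => A.smul t (B.p y)⁻¹) h2
      simp only [A.smul_mul, mul_inv_cancel, A.smul_one] at this
      exact Prod.ext this rfl
    · rintro ⟨y, x⟩
      refine ⟨(A.smul x (B.p y)⁻¹, y), ?_⟩
      simp [augBraid, A.smul_mul, A.smul_one]
  · intro x y g
    simp only [augBraid, B.aug, A.smul_mul, Prod.mk.injEq]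
    refine ⟨trivial, ?_⟩
    congr 1; group
  · intro x y
    rw [A.aug]; group
  · rintro ⟨x, y, z⟩
    simp only [augBraid, B.aug, A.smul_mul, Prod.mk.injEq]
    refine ⟨trivial, trivial, ?_⟩
    congr 1; group
end

section
/- Let (R₀, R₁, s, t, i, ∘) be a strict 2-rack: R₀ and R₁ are pointed racks (with unit 1 satisfying 1 ◁ x = 1 and x ◁ 1 = x), s, t : R₁ → R₀ and i : R₀ → R₁ are pointed rack morphisms with s ∘ i = id and t ∘ i = id, composition g ∘ f is defined whenever s(g) = t(f) and satisfies the category axioms with identities i(r), and the middle four exchange property holds: (g₁ ◁ g₂) ∘ (f₁ ◁ f₂) = (g₁ ∘ f₁) ◁ (g₂ ∘ f₂) whenever s(g₁) = t(f₁) and s(g₂) = t(f₂). Then ker(s) and ker(t) act trivially on each other: for all f₁ ∈ R₁ with t(f₁) = 1 and all g₂ ∈ R₁ with s(g₂) = 1 one has f₁ ◁ g₂ = f₁, and for all g₁ ∈ R₁ with s(g₁) = 1 and all f₂ ∈ R₁ with t(f₂) = 1 one has g₁ ◁ f₂ = g₁. -/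
/-- A pointed right rack: a right rack with a unit `1` satisfying `1 ◁ x = 1` and
`x ◁ 1 = x`. -/
class PointedRightRack (X : Type*) extends RightRack X, One X where
  one_act : ∀ x : X, act 1 x = 1
  act_one : ∀ x : X, act x 1 = x

/-- A strict 2-rack (category object in pointed racks): pointed racks `R₀` (objects)
and `R₁` (morphisms) with pointed rack morphisms `s, t : R₁ → R₀` and `i : R₀ → R₁`
satisfying `s ∘ i = id`, `t ∘ i = id`, and a composition defined on composable pairs
satisfying the category axioms. -/
structure Strict2Rack (R₀ R₁ : Type*) [PointedRightRack R₀] [PointedRightRack R₁] where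
  s : R₁ → R₀
  t : R₁ → R₀
  i : R₀ → R₁
  s_hom : ∀ x y : R₁, s (RightRack.act x y) = RightRack.act (s x) (s y)
  t_hom : ∀ x y : R₁, t (RightRack.act x y) = RightRack.act (t x) (t y)
  i_hom : ∀ x y : R₀, i (RightRack.act x y) = RightRack.act (i x) (i y)
  s_one : s 1 = 1
  t_one : t 1 = 1
  i_one : i 1 = 1
  s_i : ∀ x : R₀, s (i x) = x
  t_i : ∀ x : R₀, t (i x) = x
  comp : ∀ g f : R₁, s g = t f → R₁
  comp_s : ∀ (g f : R₁) (h : s g = t f), s (comp g f h) = s f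
  comp_t : ∀ (g f : R₁) (h : s g = t f), t (comp g f h) = t g
  id_comp : ∀ f : R₁, comp (i (t f)) f (s_i (t f)) = f
  comp_id : ∀ g : R₁, comp g (i (s g)) (t_i (s g)).symm = g
  comp_assoc : ∀ (h g f : R₁) (h₁ : s h = t g) (h₂ : s g = t f),
    comp (comp h g h₁) f ((comp_s h g h₁).trans h₂) =
      comp h (comp g f h₂) (h₁.trans (comp_t g f h₂).symm)

theorem Strict2Rack.one_comp {R₀ R₁ : Type*} [PointedRightRack R₀] [PointedRightRack R₁]
    (T : Strict2Rack R₀ R₁) (f : R₁) (h : T.s 1 = T.t f) : T.comp 1 f h = f := by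
  have ht : T.t f = 1 := by rw [← h, T.s_one]
  have := T.id_comp f
  simp only [ht, T.i_one] at this
  exact this

theorem Strict2Rack.comp_one {R₀ R₁ : Type*} [PointedRightRack R₀] [PointedRightRack R₁]
    (T : Strict2Rack R₀ R₁) (g : R₁) (h : T.s g = T.t 1) : T.comp g 1 h = g := by
  have hs : T.s g = 1 := by rw [h, T.t_one]
  have := T.comp_id g
  simp only [hs, T.i_one] at this
  exact this

/-- in a strict 2-rack satisfying the middle four exchange property
`(g₁ ◁ g₂) ∘ (f₁ ◁ f₂) = (g₁ ∘ f₁) ◁ (g₂ ∘ f₂)` (for composable pairs), the kernels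
`ker(s)` and `ker(t)` act trivially on each other. -/
theorem strict2Rack_kernels_act_trivially (R₀ R₁ : Type*)
    [PointedRightRack R₀] [PointedRightRack R₁] (T : Strict2Rack R₀ R₁)
    (mfe : ∀ (f₁ f₂ g₁ g₂ : R₁) (h₁ : T.s g₁ = T.t f₁) (h₂ : T.s g₂ = T.t f₂),
      T.comp (RightRack.act g₁ g₂) (RightRack.act f₁ f₂)
          (by rw [T.s_hom, T.t_hom, h₁, h₂]) =
        RightRack.act (T.comp g₁ f₁ h₁) (T.comp g₂ f₂ h₂)) :
    (∀ f₁ g₂ : R₁, T.t f₁ = 1 → T.s g₂ = 1 → RightRack.act f₁ g₂ = f₁) ∧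
    (∀ g₁ f₂ : R₁, T.s g₁ = 1 → T.t f₂ = 1 → RightRack.act g₁ f₂ = g₁) := by
  constructor
  · intro f₁ g₂ ht hs
    have h := mfe f₁ (1 : R₁) (1 : R₁) g₂ (by rw [T.s_one, ht]) (by rw [hs, T.t_one])
    simp only [PointedRightRack.one_act, PointedRightRack.act_one] at h
    rw [T.one_comp, T.comp_one] at h
    exact h.symm
  · intro g₁ f₂ hs ht
    have h := mfe (1 : R₁) f₂ g₁ (1 : R₁) (by rw [hs, T.t_one]) (by rw [T.s_one, ht])
    simp only [PointedRightRack.one_act, PointedRightRack.act_one] at h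
    rw [T.comp_one, T.one_comp] at h
    exact h.symm
end

section
/- Let (R₀, R₁, s, t, i, ∘) be a strict 2-rack. Set X := ker(s) = {x ∈ R₁ | s(x) = 1} and define x·r := x ◁ i(r) for x ∈ X and r ∈ R₀. Then: (i) X is preserved by this operation, i.e. s(x ◁ i(r)) = 1 for x ∈ X; (ii) this defines a rack action of R₀ on X, i.e. each map x ↦ x·r is a bijection of X and (x·r)·r' = (x·r')·(r ◁ r'); and (iii) the restriction of t to X is equivariant: t(x·r) = t(x) ◁ r. Hence t|_{ker(s)} : ker(s) → R₀ is a generalized augmented rack, and thus gives rise to a crossed module of racks. -/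
/-- for a strict 2-rack, with `X := ker(s)` and `x · r := x ◁ i(r)`:
(i) `X` is preserved by the operation; (ii) it is a rack action of `R₀` on `X`
(each `x ↦ x · r` is a bijection of `X` and the action identity holds); and
(iii) `t` restricted to `X` is equivariant. Hence `t|ker(s) : ker(s) → R₀` is a
generalized augmented rack, and thus gives rise to a crossed module of racks. -/
theorem strict2Rack_kernel_genAugRack (R₀ R₁ : Type*)
    [PointedRightRack R₀] [PointedRightRack R₁] (T : Strict2Rack R₀ R₁) :
    -- (i) `ker(s)` is preserved
    (∀ (x : R₁) (r : R₀), T.s x = 1 → T.s (RightRack.act x (T.i r)) = 1) ∧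
    -- (ii) a rack action of `R₀` on `ker(s)`
    (∀ r : R₀, Set.BijOn (fun x : R₁ => RightRack.act x (T.i r))
      {x : R₁ | T.s x = 1} {x : R₁ | T.s x = 1}) ∧
    (∀ (x : R₁) (r r' : R₀), T.s x = 1 →
      RightRack.act (RightRack.act x (T.i r)) (T.i r') =
        RightRack.act (RightRack.act x (T.i r')) (T.i (RightRack.act r r'))) ∧
    -- (iii) `t` is equivariant on `ker(s)`
    (∀ (x : R₁) (r : R₀), T.s x = 1 →
      T.t (RightRack.act x (T.i r)) = RightRack.act (T.t x) r) ∧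
    -- hence a generalized augmented rack `t|ker(s) : ker(s) → R₀`
    (∃ A : GenAugRack {x : R₁ // T.s x = 1} R₀,
      (∀ (x : {x : R₁ // T.s x = 1}) (r : R₀),
        (A.smul x r).1 = RightRack.act x.1 (T.i r)) ∧
      (∀ x : {x : R₁ // T.s x = 1}, A.p x = T.t x.1)) := by
  -- (i)
  have hpres : ∀ (x : R₁) (r : R₀), T.s x = 1 → T.s (RightRack.act x (T.i r)) = 1 := by
    intro x r hx
    rw [T.s_hom, hx, T.s_i, PointedRightRack.one_act]
  -- key: if s(x ◁ i r) = 1 then s x = 1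
  have hback : ∀ (x : R₁) (r : R₀), T.s (RightRack.act x (T.i r)) = 1 → T.s x = 1 := by
    intro x r h
    rw [T.s_hom, T.s_i] at h
    have := (RightRack.act_bij (R := R₀) r).1
    have h1 : RightRack.act (1 : R₀) r = 1 := PointedRightRack.one_act r
    exact this (h.trans h1.symm)
  have hbij : ∀ r : R₀, Set.BijOn (fun x : R₁ => RightRack.act x (T.i r))
      {x : R₁ | T.s x = 1} {x : R₁ | T.s x = 1} := by
    intro r
    refine ⟨fun x hx => hpres x r hx, fun x _ y _ h => (RightRack.act_bij (T.i r)).1 h,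
      fun y hy => ?_⟩
    obtain ⟨x, hx⟩ := (RightRack.act_bij (T.i r)).2 y
    exact ⟨x, hback x r (by simp only at hx; rw [hx]; exact hy), hx⟩
  have hact : ∀ (x : R₁) (r r' : R₀),
      RightRack.act (RightRack.act x (T.i r)) (T.i r') =
        RightRack.act (RightRack.act x (T.i r')) (T.i (RightRack.act r r')) := by
    intro x r r'
    rw [T.i_hom]
    exact RightRack.self_distrib x (T.i r) (T.i r')
  have hequiv : ∀ (x : R₁) (r : R₀),
      T.t (RightRack.act x (T.i r)) = RightRack.act (T.t x) r := by
    intro x r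
    rw [T.t_hom, T.t_i]
  refine ⟨hpres, hbij, fun x r r' _ => hact x r r', fun x r _ => hequiv x r, ?_⟩
  refine ⟨{
    smul := fun x r => ⟨RightRack.act x.1 (T.i r), hpres x.1 r x.2⟩
    smul_bij := fun r => ?_
    smul_act := fun x r r' => Subtype.ext (hact x.1 r r')
    p := fun x => T.t x.1
    aug := fun x r => hequiv x.1 r }, fun _ _ => rfl, fun _ => rfl⟩
  constructor
  · intro x y h
    exact Subtype.ext ((RightRack.act_bij (T.i r)).1 (congrArg Subtype.val h))
  · intro y
    obtain ⟨x, hx1, hx2⟩ := (hbij r).2.2 y.2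
    exact ⟨⟨x, hx1⟩, Subtype.ext hx2⟩
end

section
/- Let p₁ : X₁ → G₁ and p₀ : X₀ → G₀ be augmented racks, β : G₁ → G₀ a group homomorphism, and α : X₁ → X₀ a map over β, i.e. α(x * g) = α(x)·β(g) for all x ∈ X₁, g ∈ G₁ (writing * for the G₁-action on X₁ and · for the G₀-action on X₀), with p₀ ∘ α = β ∘ p₁. Suppose there is a right action (x,g) ↦ x ∘ g of G₀ on X₁ such that: (1) x * g = x ∘ β(g) for all g ∈ G₁, x ∈ X₁; (2) α(x ∘ g) = α(x)·g for all g ∈ G₀, x ∈ X₁; (3) (y * p₁(x)) ∘ g = (y ∘ g) * p₁(x ∘ g) for all g ∈ G₀ and x,y ∈ X₁. Equip X₁ with the rack structure x ◁ y := x * p₁(y) and X₀ with x ◁ y := x·p₀(y), and let X₀ act on X₁ by x • y := x ∘ p₀(y). Then α : X₁ → X₀ is a crossed module of racks: α is a rack morphism, the action • of X₀ on the rack X₁ is a rack action by rack automorphisms, α is equivariant (α(x • y) = α(x) ◁ y), and the Peiffer identity x • α(y) = x ◁ y holds. -/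
/-- given augmented racks `p₁ : X₁ → G₁` and `p₀ : X₀ → G₀`, a group
homomorphism `β : G₁ → G₀`, a map `α : X₁ → X₀` over `β` with `p₀ ∘ α = β ∘ p₁`, and a
right action `ρ` of `G₀` on `X₁` such that (1) `x * g = x ∘ β(g)`, (2) `α` is
equivariant for `ρ`, and (3) `(y * p₁(x)) ∘ g = (y ∘ g) * p₁(x ∘ g)`, the map
`α : X₁ → X₀` is a crossed module of racks for the rack structures `x ◁ y := x * p₁(y)`
on `X₁` and `x ◁ y := x · p₀(y)` on `X₀`, with `X₀` acting on `X₁` by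
`x • y := x ∘ p₀(y)`: `α` is a rack morphism, `•` is a rack action by rack
automorphisms, `α` is equivariant, and the Peiffer identity holds. -/
theorem two_augmented_racks_crossed_module
    (X₁ G₁ X₀ G₀ : Type*) [Group G₁] [Group G₀]
    (A₁ : AugRack X₁ G₁) (A₀ : AugRack X₀ G₀)
    (β : G₁ →* G₀) (α : X₁ → X₀)
    (hα : ∀ (x : X₁) (g : G₁), α (A₁.smul x g) = A₀.smul (α x) (β g))
    (hp : ∀ x : X₁, A₀.p (α x) = β (A₁.p x))
    (ρ : X₁ → G₀ → X₁)
    (ρ_one : ∀ x : X₁, ρ x 1 = x)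
    (ρ_mul : ∀ (x : X₁) (g h : G₀), ρ (ρ x g) h = ρ x (g * h))
    (h1 : ∀ (x : X₁) (g : G₁), A₁.smul x g = ρ x (β g))
    (h2 : ∀ (x : X₁) (g : G₀), α (ρ x g) = A₀.smul (α x) g)
    (h3 : ∀ (g : G₀) (x y : X₁),
      ρ (A₁.smul y (A₁.p x)) g = A₁.smul (ρ y g) (A₁.p (ρ x g))) :
    -- α is a morphism of racks
    (∀ x y : X₁, α (A₁.smul x (A₁.p y)) = A₀.smul (α x) (A₀.p (α y))) ∧
    -- • is a rack action of X₀ on X₁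
    (∀ y : X₀, Function.Bijective (fun x : X₁ => ρ x (A₀.p y))) ∧
    (∀ (x : X₁) (y y' : X₀),
      ρ (ρ x (A₀.p y)) (A₀.p y') =
        ρ (ρ x (A₀.p y')) (A₀.p (A₀.smul y (A₀.p y')))) ∧
    -- the action is by rack automorphisms
    (∀ (x y : X₁) (z : X₀),
      ρ (A₁.smul x (A₁.p y)) (A₀.p z) =
        A₁.smul (ρ x (A₀.p z)) (A₁.p (ρ y (A₀.p z)))) ∧
    -- α is equivariant
    (∀ (x : X₁) (y : X₀), α (ρ x (A₀.p y)) = A₀.smul (α x) (A₀.p y)) ∧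
    -- Peiffer identity
    (∀ x y : X₁, ρ x (A₀.p (α y)) = A₁.smul x (A₁.p y)) := by
  refine ⟨?_, ?_, ?_, ?_, ?_, ?_⟩
  · intro x y; rw [hα, hp]
  · intro y
    constructor
    · intro a b h
      have := congrArg (fun z => ρ z (A₀.p y)⁻¹) h
      simpa [ρ_mul, ρ_one] using this
    · intro a
      exact ⟨ρ a (A₀.p y)⁻¹, by simp [ρ_mul, ρ_one]⟩
  · intro x y y'
    rw [A₀.aug, ρ_mul, ρ_mul]
    group
  · intro x y z; exact h3 _ _ _
  · intro x y; exact h2 _ _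
  · intro x y; rw [hp, h1]
end
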